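/- arXiv:0710.3263 — 2 statements merged into one kernel-verified Lean document; each statement's English description precedes it below -/
import Mathlib

section
/- Let R be a discrete valuation ring with maximal ideal 𝔭 and valuation v, and let (c1,c2,c3) be a triple of nonnegative integers satisfying c1 ≤ c3, c2 ≤ c3, and c3 ≤ c1 + c2. Then the set C_c = {g ∈ GL(3,R) : v(g21) ≥ c1, v(g32) ≥ c2, v(g31) ≥ c3} is a subgroup of GL(3,R). -/
open scoped MatrixGroups

/-!
Writing `I k := 𝔭 ^ c k`, the valuation conditions say `g 1 0 ∈ I 1`, `g 2 1 ∈ I 2`,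
`g 2 0 ∈ I 3`, and the hypotheses on `c` become `I 3 ≤ I 1`, `I 3 ≤ I 2`, `I 1 * I 2 ≤ I 3`.
For arbitrary ideals with these properties the set is a subgroup of `GL (Fin 3) R`: the three
entries of a product are sums of products in which each term has one factor in the right ideal,
and the inverse is a unit multiple of the adjugate, whose three entries are `2 × 2` minors of
the same shape.
-/

open IsDiscreteValuationRing Ideal

namespace Matrix.GeneralLinearGroup

variable {R : Type*} [CommRing R]

def lowerIdealSubgroup (I₁ I₂ I₃ : Ideal R) (h₁ : I₃ ≤ I₁) (h₂ : I₃ ≤ I₂) (h₁₂ : I₁ * I₂ ≤ I₃) :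
    Subgroup (GL (Fin 3) R) where
  carrier := {g | (g : Matrix (Fin 3) (Fin 3) R) 1 0 ∈ I₁ ∧
    (g : Matrix (Fin 3) (Fin 3) R) 2 1 ∈ I₂ ∧ (g : Matrix (Fin 3) (Fin 3) R) 2 0 ∈ I₃}
  one_mem' := by simp
  mul_mem' := by
    rintro a b ⟨ha₁, ha₂, ha₃⟩ ⟨hb₁, hb₂, hb₃⟩
    simp only [Set.mem_ofPred_eq, Units.val_mul, Matrix.mul_apply, Fin.sum_univ_three]
    refine ⟨?_, ?_, ?_⟩
    · exact add_mem (add_mem (I₁.mul_mem_right _ ha₁) (I₁.mul_mem_left _ hb₁))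
        (I₁.mul_mem_left _ (h₁ hb₃))
    · exact add_mem (add_mem (I₂.mul_mem_right _ (h₂ ha₃)) (I₂.mul_mem_right _ ha₂))
        (I₂.mul_mem_left _ hb₂)
    · exact add_mem (add_mem (I₃.mul_mem_right _ ha₃) (h₁₂ (mul_mem_mul_rev hb₁ ha₂)))
        (I₃.mul_mem_left _ hb₃)
  inv_mem' := by
    rintro a ⟨ha₁, ha₂, ha₃⟩
    simp only [Set.mem_ofPred_eq, Matrix.coe_units_inv, Matrix.inv_def, Matrix.smul_apply,
      smul_eq_mul, Matrix.adjugate_fin_three, Matrix.of_apply, Matrix.cons_val,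
      Matrix.cons_val_zero, Matrix.cons_val_one]
    refine ⟨I₁.mul_mem_left _ ?_, I₂.mul_mem_left _ ?_, I₃.mul_mem_left _ ?_⟩
    · exact add_mem (neg_mem (I₁.mul_mem_right _ ha₁)) (I₁.mul_mem_left _ (h₁ ha₃))
    · exact add_mem (neg_mem (I₂.mul_mem_left _ ha₂)) (I₂.mul_mem_left _ (h₂ ha₃))
    · exact sub_mem (h₁₂ (mul_mem_mul ha₁ ha₂)) (I₃.mul_mem_left _ ha₃)

end Matrix.GeneralLinearGroup

theorem IsDiscreteValuationRing.natCast_le_addVal_iff_mem_pow {R : Type*} [CommRing R]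
    [IsDomain R] [IsDiscreteValuationRing R] {n : ℕ} {x : R} :
    (n : ℕ∞) ≤ addVal R x ↔ x ∈ IsLocalRing.maximalIdeal R ^ n := by
  obtain ⟨ϖ, hϖ⟩ := exists_irreducible R
  rw [hϖ.maximalIdeal_eq, span_singleton_pow, mem_span_singleton, ← addVal_le_iff_dvd,
    hϖ.addVal_pow]

/-- For a discrete valuation ring `R` with additive valuation `v` and nonnegative integers
`c1 ≤ c3`, `c2 ≤ c3`, `c3 ≤ c1 + c2`, the set
`C_c = {g ∈ GL(3,R) : v(g21) ≥ c1, v(g32) ≥ c2, v(g31) ≥ c3}` is a subgroup of `GL(3,R)`. -/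
theorem Cc_is_subgroup (R : Type) [CommRing R] [IsDomain R] [IsDiscreteValuationRing R]
    (c1 c2 c3 : ℕ) (h13 : c1 ≤ c3) (h23 : c2 ≤ c3) (h3 : c3 ≤ c1 + c2) :
    ∃ H : Subgroup (GL (Fin 3) R),
      (H : Set (GL (Fin 3) R)) =
        {g : GL (Fin 3) R | (c1 : ℕ∞) ≤ IsDiscreteValuationRing.addVal R ((g : Matrix (Fin 3) (Fin 3) R) 1 0) ∧
             (c2 : ℕ∞) ≤ IsDiscreteValuationRing.addVal R ((g : Matrix (Fin 3) (Fin 3) R) 2 1) ∧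
             (c3 : ℕ∞) ≤ IsDiscreteValuationRing.addVal R ((g : Matrix (Fin 3) (Fin 3) R) 2 0)} := by
  have h₁₂ : IsLocalRing.maximalIdeal R ^ c1 * IsLocalRing.maximalIdeal R ^ c2 ≤
      IsLocalRing.maximalIdeal R ^ c3 :=
    pow_add (IsLocalRing.maximalIdeal R) c1 c2 ▸ pow_le_pow_right h3
  refine ⟨Matrix.GeneralLinearGroup.lowerIdealSubgroup _ _ _
    (pow_le_pow_right h13) (pow_le_pow_right h23) h₁₂, ?_⟩
  ext g
  simp only [natCast_le_addVal_iff_mem_pow]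
  rfl
end

section
/- Let p be prime, n ≥ 1, and let c = (c1,c2,c3) satisfy 1 ≤ c1, 1 ≤ c2, c1 ≤ c3, c2 ≤ c3, c3 ≤ c1 + c2, with c3 = n. Let G = GL(3, ℤ/pⁿℤ) and let C̄_c = {g ∈ G : g21 ≡ 0 mod p^{c1}, g32 ≡ 0 mod p^{c2}, g31 ≡ 0 mod p^{c3}}. Then the index [G : C̄_c] equals (p+1)(p²+p+1)·p^{c1+c2+c3−3}. -/
/-!
Let `S` be the set of matrices over `ℤ/pⁿ` whose `(2,1)`, `(3,2)`, `(3,1)` entries are divisible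
by `p^c1`, `p^c2`, `p^c3`. The inequalities `c1, c2 ≤ c3 ≤ c1 + c2` make `S` closed under
multiplication, and in a finite group a submonoid is a subgroup, so `C̄_c` is a subgroup.
Modulo `p` a matrix in `S` is upper triangular, so it is invertible iff its diagonal entries are
units. Hence `C̄_c` is cut out by independent conditions on the nine entries and has order
`φ(pⁿ)³ · p^{3n} · p^{3n-c1-c2-c3}`, while reduction modulo `p` shows
`|GL₃(ℤ/pⁿ)| = |GL₃(𝔽_p)| · p^{9(n-1)}`; the quotient is the index.
-/

open scoped MatrixGroups

theorem Nat.card_subtype_isUnit (M : Type*) [Monoid M] :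
    Nat.card {x : M // IsUnit x} = Nat.card Mˣ :=
  Nat.card_range_of_injective Units.val_injective

theorem Units.card_subtype_val {M : Type*} [Monoid M] (P : M → Prop) :
    Nat.card {u : Mˣ // P u} = Nat.card {x : M // IsUnit x ∧ P x} :=
  Nat.card_congr
    { toFun u := ⟨(u.1 : M), u.1.isUnit, u.2⟩
      invFun x := ⟨x.2.1.unit, x.2.2⟩
      left_inv _ := Subtype.ext (Units.ext rfl)
      right_inv _ := rfl }

namespace ZMod

theorem isLocalHom_castHom_pow {m k : ℕ} [NeZero m] (hk : k ≠ 0) :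
    IsLocalHom (castHom (dvd_pow_self m hk) (ZMod m)) := by
  refine ⟨fun x hx => ?_⟩
  obtain ⟨x, rfl⟩ := natCast_zmod_surjective x
  rw [map_natCast, isUnit_iff_coprime] at hx
  rw [isUnit_iff_coprime]
  exact hx.pow_right k

theorem mem_ker_castHom_iff {N d : ℕ} [NeZero N] (h : d ∣ N) (x : ZMod N) :
    x ∈ RingHom.ker (castHom h (ZMod d)) ↔ (d : ZMod N) ∣ x := by
  rw [RingHom.mem_ker]
  constructor
  · intro hx
    obtain ⟨x, rfl⟩ := natCast_zmod_surjective x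
    rw [map_natCast, natCast_eq_zero_iff] at hx
    exact Nat.cast_dvd_cast hx
  · rintro ⟨y, rfl⟩
    rw [map_mul, map_natCast, natCast_self, zero_mul]

theorem card_ker_castHom {N d : ℕ} [NeZero N] (h : d ∣ N) :
    Nat.card (RingHom.ker (castHom h (ZMod d))) = N / d := by
  have hd : d ≠ 0 := by rintro rfl; exact NeZero.ne N (zero_dvd_iff.1 h)
  let f := (castHom h (ZMod d)).toAddMonoidHom
  have hrange : Nat.card f.range = d := by
    rw [AddMonoidHom.range_eq_top_of_surjective f (castHom_surjective h), AddSubgroup.card_top,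
      Nat.card_zmod]
  have := f.ker.card_mul_index
  rw [AddSubgroup.index_ker, hrange, Nat.card_zmod] at this
  exact Nat.eq_div_of_mul_eq_left hd this

theorem card_natCast_dvd {N d : ℕ} [NeZero N] (h : d ∣ N) :
    Nat.card {x : ZMod N // (d : ZMod N) ∣ x} = N / d := by
  rw [← card_ker_castHom h]
  exact Nat.card_congr (Equiv.subtypeEquivRight fun x => (mem_ker_castHom_iff h x).symm)

theorem card_natCast_pow_dvd {p n c : ℕ} [NeZero p] (hc : c ≤ n) :
    Nat.card {x : ZMod (p ^ n) // (p : ZMod (p ^ n)) ^ c ∣ x} = p ^ (n - c) := by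
  rw [← Nat.pow_div hc (Nat.pos_of_neZero p), ← card_natCast_dvd (pow_dvd_pow p hc),
    Nat.cast_pow]

end ZMod

namespace Matrix

variable {m n R S : Type*}

theorem card_subtype_forall_mem [Fintype m] [Fintype n] (T : m → n → Set R) :
    Nat.card {M : Matrix m n R // ∀ i j, M i j ∈ T i j} = ∏ i, ∏ j, Nat.card (T i j) := by
  have e : {M : Matrix m n R // ∀ i j, M i j ∈ T i j} ≃ ∀ i j, T i j :=
    (Equiv.subtypePiEquivPi (β := fun _ => n → R) (p := fun i r => ∀ j, r j ∈ T i j)).trans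
      (Equiv.piCongrRight fun i => Equiv.subtypePiEquivPi (β := fun _ => R))
  simp only [Nat.card_congr e, Nat.card_pi]

def lowerDvdSubmonoid [CommSemiring R] {a b c : R} (hac : a ∣ c) (hbc : b ∣ c)
    (hcab : c ∣ a * b) : Submonoid (Matrix (Fin 3) (Fin 3) R) where
  carrier := {M | a ∣ M 1 0 ∧ b ∣ M 2 1 ∧ c ∣ M 2 0}
  one_mem' := by simp
  mul_mem' := by
    rintro A B ⟨hA10, hA21, hA20⟩ ⟨hB10, hB21, hB20⟩
    simp only [Set.mem_ofPred_eq, mul_apply, Fin.sum_univ_three]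
    refine ⟨?_, ?_, ?_⟩
    · exact dvd_add (dvd_add (hA10.mul_right _) (hB10.mul_left _))
        ((hac.trans hB20).mul_left _)
    · exact dvd_add (dvd_add ((hbc.trans hA20).mul_right _) (hA21.mul_right _))
        (hB21.mul_left _)
    · have h21_10 : c ∣ A 2 1 * B 1 0 := hcab.trans (mul_comm a b ▸ mul_dvd_mul hA21 hB10)
      exact dvd_add (dvd_add (hA20.mul_right _) h21_10) (hB20.mul_left _)

variable [CommRing R] [CommRing S]

theorem isUnit_map_iff [Fintype n] [DecidableEq n] (f : R →+* S) [IsLocalHom f]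
    (M : Matrix n n R) : IsUnit (M.map f) ↔ IsUnit M := by
  rw [isUnit_iff_isUnit_det, isUnit_iff_isUnit_det, ← RingHom.mapMatrix_apply,
    ← RingHom.map_det, _root_.isUnit_map_iff]

theorem isUnit_iff_forall_isUnit_diag [Fintype n] [LinearOrder n] (f : R →+* S) [IsLocalHom f]
    (M : Matrix n n R) (hM : (M.map f).IsUpperTriangular) : IsUnit M ↔ ∀ i, IsUnit (M i i) := by
  rw [← isUnit_map_iff f, isUnit_iff_isUnit_det, det_of_isUpperTriangular hM, IsUnit.prod_iff]
  simp [_root_.isUnit_map_iff]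

theorem card_isUnit_and_lowerDvd (f : R →+* S) [IsLocalHom f] {a b c : R}
    (ha : f a = 0) (hb : f b = 0) (hc : f c = 0) :
    Nat.card {M : Matrix (Fin 3) (Fin 3) R // IsUnit M ∧ a ∣ M 1 0 ∧ b ∣ M 2 1 ∧ c ∣ M 2 0} =
      Nat.card Rˣ ^ 3 * Nat.card R ^ 3 *
        Nat.card {x // a ∣ x} * Nat.card {x // b ∣ x} * Nat.card {x // c ∣ x} := by
  have map_eq_zero_of_dvd : ∀ {d x : R}, f d = 0 → d ∣ x → f x = 0 := by
    rintro d _ hd ⟨y, rfl⟩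
    rw [map_mul, hd, zero_mul]
  have hdiag : ∀ M : Matrix (Fin 3) (Fin 3) R, a ∣ M 1 0 → b ∣ M 2 1 → c ∣ M 2 0 →
      (IsUnit M ↔ ∀ i, IsUnit (M i i)) := fun M h10 h21 h20 =>
    isUnit_iff_forall_isUnit_diag f M fun i j hij => by
      fin_cases i <;> fin_cases j <;> simp at hij ⊢
      exacts [map_eq_zero_of_dvd ha h10, map_eq_zero_of_dvd hc h20, map_eq_zero_of_dvd hb h21]
  let T : Fin 3 → Fin 3 → Set R :=
    ![![{x | IsUnit x}, Set.univ, Set.univ],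
      ![{x | a ∣ x}, {x | IsUnit x}, Set.univ],
      ![{x | c ∣ x}, {x | b ∣ x}, {x | IsUnit x}]]
  have hT : ∀ M : Matrix (Fin 3) (Fin 3) R,
      (IsUnit M ∧ a ∣ M 1 0 ∧ b ∣ M 2 1 ∧ c ∣ M 2 0) ↔ ∀ i j, M i j ∈ T i j := by
    intro M
    constructor
    · rintro ⟨hM, h10, h21, h20⟩ i j
      have hM := (hdiag M h10 h21 h20).1 hM
      fin_cases i <;> fin_cases j <;> simp [T, hM, h10, h21, h20]
    · intro h
      have h10 : a ∣ M 1 0 := h 1 0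
      have h21 : b ∣ M 2 1 := h 2 1
      have h20 : c ∣ M 2 0 := h 2 0
      refine ⟨(hdiag M h10 h21 h20).2 fun i => ?_, h10, h21, h20⟩
      fin_cases i
      exacts [h 0 0, h 1 1, h 2 2]
  rw [Nat.card_congr (Equiv.subtypeEquivRight hT), card_subtype_forall_mem]
  simp only [T, Fin.prod_univ_three, cons_val_zero, cons_val_one, cons_val, Set.coe_ofPred,
    Nat.card_univ, Nat.card_subtype_isUnit]
  ring

namespace GeneralLinearGroup

variable [Fintype n] [DecidableEq n]

theorem map_surjective (f : R →+* S) [IsLocalHom f] (hf : Function.Surjective f) :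
    Function.Surjective (map (n := n) f) := by
  intro B
  obtain ⟨M, hM⟩ : ∃ M : Matrix n n R, M.map f = B :=
    ⟨(B : Matrix n n S).map (Function.surjInv hf), by ext; simp [Function.surjInv_eq hf]⟩
  have hU : IsUnit M := (isUnit_map_iff f M).1 (hM ▸ B.isUnit)
  exact ⟨hU.unit, Units.ext hM⟩

theorem card_ker_map (f : R →+* S) [IsLocalHom f] :
    Nat.card (map (n := n) f).ker =
      Nat.card (RingHom.ker f) ^ (Fintype.card n * Fintype.card n) := by
  have hker : ∀ M : Matrix n n R, (IsUnit M ∧ M.map f = 1) ↔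
      ∀ i j, (M - 1) i j ∈ (RingHom.ker f : Set R) := fun M => by
    have h : M.map f = 1 ↔ ∀ i j, (M - 1) i j ∈ (RingHom.ker f : Set R) := by
      simp [← Matrix.ext_iff, sub_eq_zero, Matrix.one_apply, apply_ite]
    exact ⟨fun hM => h.1 hM.2, fun hM => ⟨(isUnit_map_iff f M).1 (h.2 hM ▸ isUnit_one), h.2 hM⟩⟩
  have e : (map (n := n) f).ker ≃ {g : GL n R // (g : Matrix n n R).map f = 1} :=
    Equiv.subtypeEquivRight fun g => by rw [MonoidHom.mem_ker, Units.ext_iff]; rfl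
  rw [Nat.card_congr e, Units.card_subtype_val (fun M : Matrix n n R => M.map f = 1),
    Nat.card_congr ((Equiv.subRight (1 : Matrix n n R)).subtypeEquiv
      (q := fun N => ∀ i j, N i j ∈ (RingHom.ker f : Set R)) hker),
    card_subtype_forall_mem]
  simp [Finset.prod_const, pow_mul]

theorem card_eq_mul_card_ker_pow (f : R →+* S) [IsLocalHom f] (hf : Function.Surjective f) :
    Nat.card (GL n R) =
      Nat.card (GL n S) * Nat.card (RingHom.ker f) ^ (Fintype.card n * Fintype.card n) := by
  rw [← card_ker_map, ← (map f).ker.card_mul_index, Subgroup.index_ker,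
    MonoidHom.range_eq_top_of_surjective _ (map_surjective f hf), Subgroup.card_top, mul_comm]

end GeneralLinearGroup

end Matrix

namespace ZMod

theorem card_GL_pow {p n : ℕ} [NeZero p] (hn : n ≠ 0) (m : ℕ) :
    Nat.card (GL (Fin m) (ZMod (p ^ n))) =
      Nat.card (GL (Fin m) (ZMod p)) * p ^ ((n - 1) * (m * m)) := by
  have := isLocalHom_castHom_pow (m := p) hn
  have hdiv : p ^ n / p = p ^ (n - 1) := by
    simpa using Nat.pow_div (n := 1) (Nat.one_le_iff_ne_zero.2 hn) (Nat.pos_of_neZero p)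
  rw [Matrix.GeneralLinearGroup.card_eq_mul_card_ker_pow _
      (castHom_surjective (dvd_pow_self p hn)),
    card_ker_castHom, hdiv, Fintype.card_fin, ← pow_mul]

theorem card_GL_three_prime {p : ℕ} [Fact p.Prime] :
    Nat.card (GL (Fin 3) (ZMod p)) = p ^ 3 * (p - 1) ^ 3 * (p + 1) * (p ^ 2 + p + 1) := by
  have hp : 1 ≤ p := (Fact.out : p.Prime).one_le
  rw [Matrix.card_GL_field, ZMod.card, Fin.prod_univ_three]
  simp only [Fin.val_zero, Fin.val_one, Fin.val_two]
  zify [hp, Nat.pow_le_pow_right hp (by norm_num : 0 ≤ 3),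
    Nat.pow_le_pow_right hp (by norm_num : 1 ≤ 3), Nat.pow_le_pow_right hp (by norm_num : 2 ≤ 3)]
  ring

theorem card_GL_three_lowerDvd_prime_pow {p n c1 c2 c3 : ℕ} (hp : p.Prime) (h1 : 1 ≤ c1)
    (h2 : 1 ≤ c2) (h3 : 1 ≤ c3) (h1n : c1 ≤ n) (h2n : c2 ≤ n) (h3n : c3 ≤ n) :
    Nat.card {g : GL (Fin 3) (ZMod (p ^ n)) //
        (p : ZMod (p ^ n)) ^ c1 ∣ (g : Matrix (Fin 3) (Fin 3) (ZMod (p ^ n))) 1 0 ∧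
        (p : ZMod (p ^ n)) ^ c2 ∣ (g : Matrix (Fin 3) (Fin 3) (ZMod (p ^ n))) 2 1 ∧
        (p : ZMod (p ^ n)) ^ c3 ∣ (g : Matrix (Fin 3) (Fin 3) (ZMod (p ^ n))) 2 0} =
      (p ^ (n - 1) * (p - 1)) ^ 3 * (p ^ n) ^ 3 * p ^ (n - c1) * p ^ (n - c2) * p ^ (n - c3) := by
  have : NeZero p := ⟨hp.ne_zero⟩
  have hn : n ≠ 0 := by omega
  have := isLocalHom_castHom_pow (m := p) hn
  have hpow : ∀ {c}, 1 ≤ c → castHom (dvd_pow_self p hn) (ZMod p) ((p : ZMod (p ^ n)) ^ c) = 0 :=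
    fun hc => by rw [map_pow, map_natCast, natCast_self, zero_pow (by omega)]
  rw [Units.card_subtype_val (fun M : Matrix (Fin 3) (Fin 3) (ZMod (p ^ n)) =>
      (p : ZMod (p ^ n)) ^ c1 ∣ M 1 0 ∧ (p : ZMod (p ^ n)) ^ c2 ∣ M 2 1 ∧
        (p : ZMod (p ^ n)) ^ c3 ∣ M 2 0),
    Matrix.card_isUnit_and_lowerDvd _ (hpow h1) (hpow h2) (hpow h3),
    card_natCast_pow_dvd h1n, card_natCast_pow_dvd h2n, card_natCast_pow_dvd h3n, Nat.card_zmod,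
    Nat.card_eq_fintype_card, card_units_eq_totient, Nat.totient_prime_pow hp (by omega)]

end ZMod

theorem index_of_Cc_mod_pn_general (p : ℕ) (hp : p.Prime) (n : ℕ)
    (c1 c2 c3 : ℕ) (h1 : 1 ≤ c1) (h2 : 1 ≤ c2)
    (h13 : c1 ≤ c3) (h23 : c2 ≤ c3) (h3 : c3 ≤ c1 + c2) (h3n : c3 = n) :
    ∃ H : Subgroup (GL (Fin 3) (ZMod (p ^ n))),
      (H : Set (GL (Fin 3) (ZMod (p ^ n)))) =
        {g : GL (Fin 3) (ZMod (p ^ n)) |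
          (p : ZMod (p ^ n))^c1 ∣ (g : Matrix (Fin 3) (Fin 3) (ZMod (p ^ n))) 1 0 ∧
          (p : ZMod (p ^ n))^c2 ∣ (g : Matrix (Fin 3) (Fin 3) (ZMod (p ^ n))) 2 1 ∧
          (p : ZMod (p ^ n))^c3 ∣ (g : Matrix (Fin 3) (Fin 3) (ZMod (p ^ n))) 2 0} ∧
      H.index = (p + 1) * (p ^ 2 + p + 1) * p ^ (c1 + c2 + c3 - 3) := by
  subst h3n
  have : Fact p.Prime := ⟨hp⟩
  let S : Submonoid (GL (Fin 3) (ZMod (p ^ c3))) :=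
    (Matrix.lowerDvdSubmonoid (pow_dvd_pow (p : ZMod (p ^ c3)) h13) (pow_dvd_pow _ h23)
      (by rw [← pow_add]; exact pow_dvd_pow _ h3)).comap (Units.coeHom _)
  obtain ⟨H, hH⟩ : ∃ H : Subgroup (GL (Fin 3) (ZMod (p ^ c3))),
      (H : Set (GL (Fin 3) (ZMod (p ^ c3)))) = S :=
    ⟨Subgroup.closure S,
      congrArg SetLike.coe (Subgroup.closure_toSubmonoid_of_finite.trans S.closure_eq)⟩
  refine ⟨H, hH, Nat.eq_of_mul_eq_mul_right (Nat.card_pos (α := H)) ?_⟩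
  have hcardH := (Nat.card_congr (Equiv.setCongr hH)).trans
    (ZMod.card_GL_three_lowerDvd_prime_pow hp h1 h2 (by omega) h13 h23 le_rfl)
  rw [SetLike.coe_sort_coe] at hcardH
  rw [H.index_mul_card, ZMod.card_GL_pow (by omega) 3, ZMod.card_GL_three_prime, hcardH]
  have hexp : c1 + c2 + c3 - 3 + 3 * (c3 - 1) + 3 * c3 + (c3 - c1) + (c3 - c2) + (c3 - c3) =
      3 + (c3 - 1) * (3 * 3) := by omega
  symm
  calc _ = (p + 1) * (p ^ 2 + p + 1) * (p - 1) ^ 3 *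
        p ^ (c1 + c2 + c3 - 3 + 3 * (c3 - 1) + 3 * c3 + (c3 - c1) + (c3 - c2) + (c3 - c3)) := by
        ring
    _ = _ := by rw [hexp]; ring

/-- For `G = GL(3, ℤ/pⁿℤ)` and `c` with `1 ≤ c1, c2`, `c1, c2 ≤ c3 ≤ c1+c2`, `c3 = n`,
the index of `C̄_c = {g : g21 ≡ 0 mod p^c1, g32 ≡ 0 mod p^c2, g31 ≡ 0 mod p^c3}` in `G`
is `(p+1)(p²+p+1)·p^(c1+c2+c3−3)`. -/
theorem index_of_Cc_mod_pn (p : ℕ) (hp : p.Prime) (n : ℕ) (hn : 1 ≤ n)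
    (c1 c2 c3 : ℕ) (h1 : 1 ≤ c1) (h2 : 1 ≤ c2)
    (h13 : c1 ≤ c3) (h23 : c2 ≤ c3) (h3 : c3 ≤ c1 + c2) (h3n : c3 = n) :
    ∃ H : Subgroup (GL (Fin 3) (ZMod (p ^ n))),
      (H : Set (GL (Fin 3) (ZMod (p ^ n)))) =
        {g : GL (Fin 3) (ZMod (p ^ n)) |
          (p : ZMod (p ^ n))^c1 ∣ (g : Matrix (Fin 3) (Fin 3) (ZMod (p ^ n))) 1 0 ∧
          (p : ZMod (p ^ n))^c2 ∣ (g : Matrix (Fin 3) (Fin 3) (ZMod (p ^ n))) 2 1 ∧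
          (p : ZMod (p ^ n))^c3 ∣ (g : Matrix (Fin 3) (Fin 3) (ZMod (p ^ n))) 2 0} ∧
      H.index = (p + 1) * (p ^ 2 + p + 1) * p ^ (c1 + c2 + c3 - 3) :=
  index_of_Cc_mod_pn_general p hp n c1 c2 c3 h1 h2 h13 h23 h3 h3n
end
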